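/- On ℝ² in polar coordinates, define Nw = −∂/∂r(Δw) − (1−ν) r^{−2} ∂/∂θ(∂²w/(∂r∂θ) − r^{−1}∂w/∂θ). If w(x) = A e^{iκr}/√r f(θ) with f smooth, then Nw(x) = iκ³ A e^{iκr}/√r f(θ) + O(r^{−3/2}) as r → ∞, uniformly in θ. -/

import Mathlib

open MeasureTheory Real

/-- Partial derivative in the first coordinate direction on ℝ². -/
noncomputable def pd1 {E : Type*} [NormedAddCommGroup E] [NormedSpace ℝ E]
    (f : ℝ × ℝ → E) : ℝ × ℝ → E := fun x => fderiv ℝ f x (1, 0)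

/-- Partial derivative in the second coordinate direction on ℝ². -/
noncomputable def pd2 {E : Type*} [NormedAddCommGroup E] [NormedSpace ℝ E]
    (f : ℝ × ℝ → E) : ℝ × ℝ → E := fun x => fderiv ℝ f x (0, 1)

/-- The Laplacian on ℝ². -/
noncomputable def lap2 {E : Type*} [NormedAddCommGroup E] [NormedSpace ℝ E]
    (f : ℝ × ℝ → E) : ℝ × ℝ → E := fun x => pd1 (pd1 f) x + pd2 (pd2 f) x

/-- The far-field ansatz `w(r,θ) = A e^{iκr}/√r · f(θ)` as a function on polar coordinates. -/
noncomputable def ansatz (A : ℂ) (κ : ℝ) (f : ℝ → ℂ) : ℝ × ℝ → ℂ :=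
  fun p => A * Complex.exp (Complex.I * Complex.ofReal (κ * p.1))
    / Complex.ofReal (Real.sqrt p.1) * f p.2

/-- The Laplacian in polar form: `Δw = w_rr + r⁻¹ w_r + r⁻² w_θθ`
(first coordinate `r`, second coordinate `θ`). -/
noncomputable def lapPolar (w : ℝ × ℝ → ℂ) : ℝ × ℝ → ℂ :=
  fun p => pd1 (pd1 w) p + Complex.ofReal p.1⁻¹ * pd1 w p
    + Complex.ofReal (p.1 ^ 2)⁻¹ * pd2 (pd2 w) p

/-- The transverse-force operator on circles `r = const` with outward normal, in polar form:
`Nw = −∂_r(Δw) − (1−ν) r⁻² ∂_θ(w_{rθ} − r⁻¹ w_θ)`. -/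
noncomputable def Npolar (ν : ℝ) (w : ℝ × ℝ → ℂ) : ℝ × ℝ → ℂ :=
  fun p => -(pd1 (lapPolar w) p) - ((1:ℂ) - (ν:ℂ)) * Complex.ofReal (p.1 ^ 2)⁻¹ *
    pd2 (fun q => pd1 (pd2 w) q - Complex.ofReal q.1⁻¹ * pd2 w q) p

/-- basic monomial `e^{iκr} r^a` -/
noncomputable def mono (κ a : ℝ) : ℝ → ℂ :=
  fun r => Complex.exp (Complex.I * Complex.ofReal (κ * r)) * Complex.ofReal (r ^ a)

lemma mono_hasDerivAt (κ a : ℝ) {r : ℝ} (hr : 0 < r) :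
    HasDerivAt (mono κ a) (Complex.I * κ * mono κ a r + (a : ℂ) * mono κ (a - 1) r) r := by
  have h0 : HasDerivAt (fun r : ℝ => κ * r) κ r := by simpa using (hasDerivAt_id r).const_mul κ
  have h1 := ((h0.ofReal_comp).const_mul Complex.I).cexp
  have h2 := (Real.hasDerivAt_rpow_const (x := r) (p := a) (Or.inl hr.ne')).ofReal_comp
  have h := h1.mul h2
  unfold mono
  refine h.congr_deriv ?_
  push_cast
  ring

lemma mono_norm (κ a : ℝ) {r : ℝ} (hr : 0 < r) : ‖mono κ a r‖ = r ^ a := by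
  unfold mono
  rw [norm_mul, Complex.norm_exp, Complex.norm_real]
  simp [abs_of_nonneg (Real.rpow_nonneg hr.le a)]

/-- linear combination of the four monomials we need -/
noncomputable def mlc (A : ℂ) (κ : ℝ) (c₁ c₃ c₅ c₇ : ℂ) : ℝ → ℂ :=
  fun r => A * (c₁ * mono κ (-(1/2)) r + c₃ * mono κ (-(3/2)) r
    + c₅ * mono κ (-(5/2)) r + c₇ * mono κ (-(7/2)) r)

lemma mlc_hasDerivAt (A : ℂ) (κ : ℝ) (c₁ c₃ c₅ : ℂ) {r : ℝ} (hr : 0 < r) :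
    HasDerivAt (mlc A κ c₁ c₃ c₅ 0)
      (mlc A κ (Complex.I * κ * c₁) (Complex.I * κ * c₃ - (1/2) * c₁)
        (Complex.I * κ * c₅ - (3/2) * c₃) (-(5/2) * c₅) r) r := by
  have h :=
    ((((mono_hasDerivAt κ (-(1/2)) hr).const_mul c₁).add
      ((mono_hasDerivAt κ (-(3/2)) hr).const_mul c₃)).add
      (((mono_hasDerivAt κ (-(5/2)) hr).const_mul c₅).add
      ((mono_hasDerivAt κ (-(7/2)) hr).const_mul (0:ℂ)))).const_mul A
  have e3 : (-(1/2) : ℝ) - 1 = -(3/2) := by norm_num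
  have e5 : (-(3/2) : ℝ) - 1 = -(5/2) := by norm_num
  have e7 : (-(5/2) : ℝ) - 1 = -(7/2) := by norm_num
  rw [e3, e5, e7] at h
  have hfun : (fun y => A * (c₁ * mono κ (-(1/2)) y + c₃ * mono κ (-(3/2)) y
      + (c₅ * mono κ (-(5/2)) y + 0 * mono κ (-(7/2)) y))) = mlc A κ c₁ c₃ c₅ 0 := by
    funext y; unfold mlc; ring
  simp only [Pi.add_apply] at h
  rw [hfun] at h
  refine h.congr_deriv ?_
  unfold mlc
  push_cast
  ring

lemma mlc_shift1 (A : ℂ) (κ : ℝ) (c₁ c₃ : ℂ) {r : ℝ} (hr : 0 < r) :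
    Complex.ofReal r⁻¹ * mlc A κ c₁ c₃ 0 0 r = mlc A κ 0 c₁ c₃ 0 r := by
  have key : ∀ a : ℝ, Complex.ofReal r⁻¹ * mono κ a r = mono κ (a - 1) r := by
    intro a
    unfold mono
    rw [Real.rpow_sub hr, Real.rpow_one]
    push_cast
    have hr' : (r : ℂ) ≠ 0 := Complex.ofReal_ne_zero.mpr hr.ne'
    field_simp
  have h1 := key (-(1/2)); have h2 := key (-(3/2))
  rw [show (-(1/2) : ℝ) - 1 = -(3/2) by norm_num] at h1
  rw [show (-(3/2) : ℝ) - 1 = -(5/2) by norm_num] at h2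
  unfold mlc
  linear_combination A * c₁ * h1 + A * c₃ * h2

lemma mlc_shift2 (A : ℂ) (κ : ℝ) (c₁ c₃ : ℂ) {r : ℝ} (hr : 0 < r) :
    Complex.ofReal (r ^ 2)⁻¹ * mlc A κ c₁ c₃ 0 0 r = mlc A κ 0 0 c₁ c₃ r := by
  have key : ∀ a : ℝ, Complex.ofReal (r ^ 2)⁻¹ * mono κ a r = mono κ (a - 2) r := by
    intro a
    unfold mono
    rw [Real.rpow_sub hr, show ((2:ℝ)) = ((2:ℕ):ℝ) by norm_num, Real.rpow_natCast]
    push_cast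
    have hr' : (r : ℂ) ≠ 0 := Complex.ofReal_ne_zero.mpr hr.ne'
    field_simp
  have h1 := key (-(1/2)); have h2 := key (-(3/2))
  rw [show (-(1/2) : ℝ) - 2 = -(5/2) by norm_num] at h1
  rw [show (-(3/2) : ℝ) - 2 = -(7/2) by norm_num] at h2
  unfold mlc
  linear_combination A * c₁ * h1 + A * c₃ * h2

open ContinuousLinearMap in
lemma pd_sep {g h : ℝ → ℂ} {a b : ℂ} {p : ℝ × ℝ}
    (hg : HasDerivAt g a p.1) (hh : HasDerivAt h b p.2) :
    pd1 (fun q : ℝ × ℝ => g q.1 * h q.2) p = a * h p.2 ∧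
    pd2 (fun q : ℝ × ℝ => g q.1 * h q.2) p = g p.1 * b := by
  have H1 : HasFDerivAt (fun q : ℝ × ℝ => g q.1)
      ((smulRight (1 : ℝ →L[ℝ] ℝ) a).comp (fst ℝ ℝ ℝ)) p :=
    (hg.hasFDerivAt).comp p hasFDerivAt_fst
  have H2 : HasFDerivAt (fun q : ℝ × ℝ => h q.2)
      ((smulRight (1 : ℝ →L[ℝ] ℝ) b).comp (snd ℝ ℝ ℝ)) p :=
    (hh.hasFDerivAt).comp p hasFDerivAt_snd
  have H : HasFDerivAt (fun q : ℝ × ℝ => g q.1 * h q.2) _ p := H1.mul H2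
  constructor <;> [unfold pd1; unfold pd2] <;> rw [H.fderiv] <;>
    simp [smul_eq_mul] <;> ring

open ContinuousLinearMap in
lemma pd1_sep2 {g h g' h' : ℝ → ℂ} {a b a' b' : ℂ} {p : ℝ × ℝ}
    (hg : HasDerivAt g a p.1) (hh : HasDerivAt h b p.2)
    (hg' : HasDerivAt g' a' p.1) (hh' : HasDerivAt h' b' p.2) :
    pd1 (fun q : ℝ × ℝ => g q.1 * h q.2 + g' q.1 * h' q.2) p
      = a * h p.2 + a' * h' p.2 := by
  have H1 : HasFDerivAt (fun q : ℝ × ℝ => g q.1)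
      ((smulRight (1 : ℝ →L[ℝ] ℝ) a).comp (fst ℝ ℝ ℝ)) p :=
    (hg.hasFDerivAt).comp p hasFDerivAt_fst
  have H2 : HasFDerivAt (fun q : ℝ × ℝ => h q.2)
      ((smulRight (1 : ℝ →L[ℝ] ℝ) b).comp (snd ℝ ℝ ℝ)) p :=
    (hh.hasFDerivAt).comp p hasFDerivAt_snd
  have H3 : HasFDerivAt (fun q : ℝ × ℝ => g' q.1)
      ((smulRight (1 : ℝ →L[ℝ] ℝ) a').comp (fst ℝ ℝ ℝ)) p :=
    (hg'.hasFDerivAt).comp p hasFDerivAt_fst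
  have H4 : HasFDerivAt (fun q : ℝ × ℝ => h' q.2)
      ((smulRight (1 : ℝ →L[ℝ] ℝ) b').comp (snd ℝ ℝ ℝ)) p :=
    (hh'.hasFDerivAt).comp p hasFDerivAt_snd
  have H : HasFDerivAt (fun q : ℝ × ℝ => g q.1 * h q.2 + g' q.1 * h' q.2) _ p :=
    (H1.mul H2).add (H3.mul H4)
  unfold pd1
  rw [H.fderiv]
  simp [smul_eq_mul]
  ring

lemma pd1_congr_pos {u v : ℝ × ℝ → ℂ} (h : ∀ q : ℝ × ℝ, 0 < q.1 → u q = v q)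
    {p : ℝ × ℝ} (hp : 0 < p.1) : pd1 u p = pd1 v p := by
  have hmem : {q : ℝ × ℝ | 0 < q.1} ∈ nhds p :=
    (isOpen_lt continuous_const continuous_fst).mem_nhds hp
  have huv : u =ᶠ[nhds p] v := Filter.eventuallyEq_of_mem hmem h
  unfold pd1; rw [huv.fderiv_eq]

lemma pd2_congr_pos {u v : ℝ × ℝ → ℂ} (h : ∀ q : ℝ × ℝ, 0 < q.1 → u q = v q)
    {p : ℝ × ℝ} (hp : 0 < p.1) : pd2 u p = pd2 v p := by
  have hmem : {q : ℝ × ℝ | 0 < q.1} ∈ nhds p :=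
    (isOpen_lt continuous_const continuous_fst).mem_nhds hp
  have huv : u =ᶠ[nhds p] v := Filter.eventuallyEq_of_mem hmem h
  unfold pd2; rw [huv.fderiv_eq]

lemma mlc_bound (A : ℂ) (κ : ℝ) (c₃ c₅ c₇ : ℂ) {r : ℝ} (hr : 1 ≤ r) :
    ‖mlc A κ 0 c₃ c₅ c₇ r‖ ≤ ‖A‖ * (‖c₃‖ + ‖c₅‖ + ‖c₇‖) * r ^ (-(3/2) : ℝ) := by
  have hr0 : (0:ℝ) < r := lt_of_lt_of_le one_pos hr
  have h5 : r ^ (-(5/2) : ℝ) ≤ r ^ (-(3/2) : ℝ) :=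
    Real.rpow_le_rpow_of_exponent_le hr (by norm_num)
  have h7 : r ^ (-(7/2) : ℝ) ≤ r ^ (-(3/2) : ℝ) :=
    Real.rpow_le_rpow_of_exponent_le hr (by norm_num)
  have hpos : (0:ℝ) ≤ r ^ (-(3/2) : ℝ) := Real.rpow_nonneg hr0.le _
  unfold mlc
  rw [norm_mul]
  have step : ‖(0:ℂ) * mono κ (-(1/2)) r + c₃ * mono κ (-(3/2)) r
      + c₅ * mono κ (-(5/2)) r + c₇ * mono κ (-(7/2)) r‖
      ≤ (‖c₃‖ + ‖c₅‖ + ‖c₇‖) * r ^ (-(3/2) : ℝ) := by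
    calc ‖(0:ℂ) * mono κ (-(1/2)) r + c₃ * mono κ (-(3/2)) r
        + c₅ * mono κ (-(5/2)) r + c₇ * mono κ (-(7/2)) r‖
        ≤ ‖(0:ℂ) * mono κ (-(1/2)) r + c₃ * mono κ (-(3/2)) r + c₅ * mono κ (-(5/2)) r‖
          + ‖c₇ * mono κ (-(7/2)) r‖ := norm_add_le _ _
      _ ≤ (‖(0:ℂ) * mono κ (-(1/2)) r + c₃ * mono κ (-(3/2)) r‖ + ‖c₅ * mono κ (-(5/2)) r‖)
          + ‖c₇ * mono κ (-(7/2)) r‖ := by gcongr; exact norm_add_le _ _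
      _ = ‖c₃‖ * r ^ (-(3/2):ℝ) + ‖c₅‖ * r ^ (-(5/2):ℝ) + ‖c₇‖ * r ^ (-(7/2):ℝ) := by
          rw [zero_mul, zero_add, norm_mul, norm_mul, norm_mul,
            mono_norm κ _ hr0, mono_norm κ _ hr0, mono_norm κ _ hr0]
      _ ≤ ‖c₃‖ * r ^ (-(3/2):ℝ) + ‖c₅‖ * r ^ (-(3/2):ℝ) + ‖c₇‖ * r ^ (-(3/2):ℝ) := by
          gcongr
      _ = (‖c₃‖ + ‖c₅‖ + ‖c₇‖) * r ^ (-(3/2) : ℝ) := by ring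
  calc ‖A‖ * ‖_ + _ + _ + _‖ ≤ ‖A‖ * ((‖c₃‖ + ‖c₅‖ + ‖c₇‖) * r ^ (-(3/2) : ℝ)) :=
        mul_le_mul_of_nonneg_left step (norm_nonneg A)
    _ = ‖A‖ * (‖c₃‖ + ‖c₅‖ + ‖c₇‖) * r ^ (-(3/2) : ℝ) := by ring

lemma periodic_deriv' {g : ℝ → ℂ} {c : ℝ} (hg : Function.Periodic g c) :
    Function.Periodic (deriv g) c := by
  intro x
  have h1 : (fun y => g (y + c)) = g := funext hg
  have h2 : deriv (fun y => g (y + c)) x = deriv g (x + c) := deriv_comp_add_const g c x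
  rw [h1] at h2
  exact h2.symm

lemma periodic_bound {g : ℝ → ℂ} (hg : Function.Periodic g (2 * Real.pi))
    (hc : Continuous g) : ∃ M : ℝ, 0 ≤ M ∧ ∀ x, ‖g x‖ ≤ M := by
  have hb := hg.isBounded_of_continuous Real.two_pi_pos.ne' hc
  obtain ⟨M, hM⟩ := (isBounded_iff_forall_norm_le).mp hb
  refine ⟨max M 0, le_max_right _ _, fun x => ?_⟩
  exact le_trans (hM _ (Set.mem_range_self x)) (le_max_left _ _)

/-- For `w = A e^{iκr}/√r · f(θ)` with `f` smooth, `Nw = iκ³ A e^{iκr}/√r f(θ) + O(r^{−3/2})`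
as `r → ∞`, uniformly in `θ`. -/
theorem N_far_field (A : ℂ) (κ ν : ℝ) (hκ : 0 < κ) (hν : ν ∈ Set.Ico (0:ℝ) (1/2))
    (f : ℝ → ℂ) (hf : ContDiff ℝ (⊤ : ℕ∞) f) (hper : Function.Periodic f (2 * Real.pi)) :
    ∃ C R : ℝ, 0 < C ∧ 0 < R ∧ ∀ p : ℝ × ℝ, R ≤ p.1 →
      ‖Npolar ν (ansatz A κ f) p - Complex.I * (κ:ℂ)^3 * ansatz A κ f p‖
        ≤ C * p.1 ^ (-(3/2) : ℝ) := by
  set w := ansatz A κ f with hwdef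
  have hfi : ContDiff ℝ (⊤ : ℕ∞) f := hf.of_le (by simp)
  have h1 := contDiff_infty_iff_deriv.mp hfi
  have h2 := contDiff_infty_iff_deriv.mp h1.2
  have h3 := contDiff_infty_iff_deriv.mp h2.2
  have hfd : ∀ x : ℝ, HasDerivAt f (deriv f x) x := fun x => (h1.1 x).hasDerivAt
  have hf1d : ∀ x : ℝ, HasDerivAt (deriv f) (deriv (deriv f) x) x :=
    fun x => (h2.1 x).hasDerivAt
  have hf2d : ∀ x : ℝ, HasDerivAt (deriv (deriv f)) (deriv (deriv (deriv f)) x) x :=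
    fun x => (h3.1 x).hasDerivAt
  -- derivative facts for the radial parts
  have hd0 : ∀ r : ℝ, 0 < r → HasDerivAt (mlc A κ 1 0 0 0)
      (mlc A κ (Complex.I*κ) (-(1/2)) 0 0 r) r := by
    intro r hr
    have h := mlc_hasDerivAt A κ 1 0 0 hr
    convert h using 1; unfold mlc; ring
  have hd1 : ∀ r : ℝ, 0 < r → HasDerivAt (mlc A κ (Complex.I*κ) (-(1/2)) 0 0)
      (mlc A κ ((Complex.I*κ)^2) (-(Complex.I*κ)) (3/4) 0 r) r := by
    intro r hr
    have h := mlc_hasDerivAt A κ (Complex.I*κ) (-(1/2)) 0 hr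
    convert h using 1; unfold mlc; ring
  have hdP : ∀ r : ℝ, 0 < r → HasDerivAt (mlc A κ ((Complex.I*κ)^2) 0 (1/4) 0)
      (mlc A κ ((Complex.I*κ)^3) (-(1/2)*(Complex.I*κ)^2) ((1/4)*(Complex.I*κ)) (-(5/8)) r) r := by
    intro r hr
    have h := mlc_hasDerivAt A κ ((Complex.I*κ)^2) 0 (1/4) hr
    convert h using 1; unfold mlc; ring
  have hdQ : ∀ r : ℝ, 0 < r → HasDerivAt (mlc A κ 0 0 1 0)
      (mlc A κ 0 0 (Complex.I*κ) (-(5/2)) r) r := by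
    intro r hr
    have h := mlc_hasDerivAt A κ 0 0 1 hr
    convert h using 1; unfold mlc; ring
  have hdR : ∀ r : ℝ, 0 < r → HasDerivAt (mlc A κ (Complex.I*κ) (-(3/2)) 0 0)
      (mlc A κ ((Complex.I*κ)^2) (-2*(Complex.I*κ)) (9/4) 0 r) r := by
    intro r hr
    have h := mlc_hasDerivAt A κ (Complex.I*κ) (-(3/2)) 0 hr
    convert h using 1; unfold mlc; ring
  -- pointwise identities on r > 0
  have hW : ∀ q : ℝ × ℝ, 0 < q.1 → w q = mlc A κ 1 0 0 0 q.1 * f q.2 := by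
    intro q hq
    rw [hwdef]
    unfold ansatz mlc mono
    rw [div_eq_mul_inv, ← Complex.ofReal_inv]
    have h1 : (Real.sqrt q.1)⁻¹ = q.1 ^ (-(1/2) : ℝ) := by
      rw [Real.sqrt_eq_rpow, Real.rpow_neg hq.le]
    rw [h1]; ring
  have h1w : ∀ q : ℝ × ℝ, 0 < q.1 →
      pd1 w q = mlc A κ (Complex.I*κ) (-(1/2)) 0 0 q.1 * f q.2 := by
    intro q hq
    rw [pd1_congr_pos hW hq]
    exact (pd_sep (hd0 q.1 hq) (hfd q.2)).1
  have h2w : ∀ q : ℝ × ℝ, 0 < q.1 →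
      pd2 w q = mlc A κ 1 0 0 0 q.1 * deriv f q.2 := by
    intro q hq
    rw [pd2_congr_pos hW hq]
    exact (pd_sep (hd0 q.1 hq) (hfd q.2)).2
  have h11 : ∀ q : ℝ × ℝ, 0 < q.1 →
      pd1 (pd1 w) q = mlc A κ ((Complex.I*κ)^2) (-(Complex.I*κ)) (3/4) 0 q.1 * f q.2 := by
    intro q hq
    rw [pd1_congr_pos h1w hq]
    exact (pd_sep (hd1 q.1 hq) (hfd q.2)).1
  have h22 : ∀ q : ℝ × ℝ, 0 < q.1 →
      pd2 (pd2 w) q = mlc A κ 1 0 0 0 q.1 * deriv (deriv f) q.2 := by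
    intro q hq
    rw [pd2_congr_pos h2w hq]
    exact (pd_sep (hd0 q.1 hq) (hf1d q.2)).2
  have h12 : ∀ q : ℝ × ℝ, 0 < q.1 →
      pd1 (pd2 w) q = mlc A κ (Complex.I*κ) (-(1/2)) 0 0 q.1 * deriv f q.2 := by
    intro q hq
    rw [pd1_congr_pos h2w hq]
    exact (pd_sep (hd0 q.1 hq) (hf1d q.2)).1
  have hlap : ∀ q : ℝ × ℝ, 0 < q.1 →
      lapPolar w q = mlc A κ ((Complex.I*κ)^2) 0 (1/4) 0 q.1 * f q.2
        + mlc A κ 0 0 1 0 q.1 * deriv (deriv f) q.2 := by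
    intro q hq
    unfold lapPolar
    rw [h11 q hq, h1w q hq, h22 q hq,
      ← mul_assoc (Complex.ofReal q.1⁻¹), mlc_shift1 A κ _ _ hq,
      ← mul_assoc (Complex.ofReal (q.1 ^ 2)⁻¹), mlc_shift2 A κ _ _ hq]
    unfold mlc; ring
  have hpd1lap : ∀ q : ℝ × ℝ, 0 < q.1 →
      pd1 (lapPolar w) q
        = mlc A κ ((Complex.I*κ)^3) (-(1/2)*(Complex.I*κ)^2) ((1/4)*(Complex.I*κ)) (-(5/8)) q.1 * f q.2
        + mlc A κ 0 0 (Complex.I*κ) (-(5/2)) q.1 * deriv (deriv f) q.2 := by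
    intro q hq
    rw [pd1_congr_pos hlap hq]
    exact pd1_sep2 (hdP q.1 hq) (hfd q.2) (hdQ q.1 hq) (hf2d q.2)
  have hV : ∀ q : ℝ × ℝ, 0 < q.1 →
      (pd1 (pd2 w) q - Complex.ofReal q.1⁻¹ * pd2 w q)
        = mlc A κ (Complex.I*κ) (-(3/2)) 0 0 q.1 * deriv f q.2 := by
    intro q hq
    rw [h12 q hq, h2w q hq, ← mul_assoc (Complex.ofReal q.1⁻¹), mlc_shift1 A κ 1 0 hq]
    unfold mlc; ring
  have hpd2V : ∀ q : ℝ × ℝ, 0 < q.1 →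
      pd2 (fun q => pd1 (pd2 w) q - Complex.ofReal q.1⁻¹ * pd2 w q) q
        = mlc A κ (Complex.I*κ) (-(3/2)) 0 0 q.1 * deriv (deriv f) q.2 := by
    intro q hq
    rw [pd2_congr_pos hV hq]
    exact (pd_sep (hdR q.1 hq) (hf1d q.2)).2
  have hb3 : Complex.I * (κ:ℂ)^3 = -((Complex.I*κ)^3) := by
    rw [mul_pow, show Complex.I ^ 3 = -Complex.I by rw [pow_succ, Complex.I_sq]; ring]; ring
  have hD : ∀ q : ℝ × ℝ, 0 < q.1 →
      Npolar ν w q - Complex.I * (κ:ℂ)^3 * w q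
        = mlc A κ 0 ((1/2)*(Complex.I*κ)^2) (-(1/4)*(Complex.I*κ)) (5/8) q.1 * f q.2
        + mlc A κ 0 0 (-((2:ℂ)-(ν:ℂ))*(Complex.I*κ)) ((4:ℂ) - (3/2)*(ν:ℂ)) q.1
            * deriv (deriv f) q.2 := by
    intro q hq
    simp only [Npolar]
    rw [hpd1lap q hq, hpd2V q hq, hW q hq, hb3]
    have s := mlc_shift2 A κ (Complex.I*κ) (-(3/2)) hq
    unfold mlc at s ⊢
    linear_combination (-((1:ℂ) - (ν:ℂ)) * deriv (deriv f) q.2) * s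
  -- bounds
  obtain ⟨Mf, hMf0, hMf⟩ := periodic_bound hper hfi.continuous
  have hper2 : Function.Periodic (deriv (deriv f)) (2 * Real.pi) :=
    periodic_deriv' (periodic_deriv' hper)
  obtain ⟨M2, hM20, hM2⟩ := periodic_bound hper2 h2.2.continuous
  set K1 : ℝ := ‖((1/2)*(Complex.I*κ)^2 : ℂ)‖ + ‖(-(1/4)*(Complex.I*κ) : ℂ)‖ + ‖((5/8) : ℂ)‖
    with hK1def
  set K2 : ℝ := ‖(0:ℂ)‖ + ‖(-((2:ℂ)-(ν:ℂ))*(Complex.I*κ) : ℂ)‖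
      + ‖((4:ℂ) - (3/2)*(ν:ℂ) : ℂ)‖ with hK2def
  have hK1 : 0 ≤ K1 := by positivity
  have hK2 : 0 ≤ K2 := by positivity
  refine ⟨‖A‖ * (K1 * Mf + K2 * M2) + 1, 1, ?_, one_pos, ?_⟩
  · have h0 : 0 ≤ ‖A‖ * (K1 * Mf + K2 * M2) :=
      mul_nonneg (norm_nonneg _) (add_nonneg (mul_nonneg hK1 hMf0) (mul_nonneg hK2 hM20))
    linarith
  · intro p hp1
    have hp0 : 0 < p.1 := lt_of_lt_of_le one_pos hp1
    rw [hD p hp0]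
    have b1 := mlc_bound A κ ((1/2)*(Complex.I*κ)^2) (-(1/4)*(Complex.I*κ)) (5/8) hp1
    have b2 := mlc_bound A κ 0 (-((2:ℂ)-(ν:ℂ))*(Complex.I*κ)) ((4:ℂ) - (3/2)*(ν:ℂ)) hp1
    have hrp : (0:ℝ) ≤ p.1 ^ (-(3/2) : ℝ) := Real.rpow_nonneg hp0.le _
    calc ‖mlc A κ 0 ((1/2)*(Complex.I*κ)^2) (-(1/4)*(Complex.I*κ)) (5/8) p.1 * f p.2
          + mlc A κ 0 0 (-((2:ℂ)-(ν:ℂ))*(Complex.I*κ)) ((4:ℂ) - (3/2)*(ν:ℂ)) p.1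
            * deriv (deriv f) p.2‖
        ≤ ‖mlc A κ 0 ((1/2)*(Complex.I*κ)^2) (-(1/4)*(Complex.I*κ)) (5/8) p.1‖ * ‖f p.2‖
          + ‖mlc A κ 0 0 (-((2:ℂ)-(ν:ℂ))*(Complex.I*κ)) ((4:ℂ) - (3/2)*(ν:ℂ)) p.1‖
            * ‖deriv (deriv f) p.2‖ := by
          refine le_trans (norm_add_le _ _) ?_
          rw [norm_mul, norm_mul]
      _ ≤ (‖A‖ * K1 * p.1 ^ (-(3/2) : ℝ)) * Mf + (‖A‖ * K2 * p.1 ^ (-(3/2) : ℝ)) * M2 := by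
          apply add_le_add
          · exact mul_le_mul b1 (hMf p.2) (norm_nonneg _) (by positivity)
          · exact mul_le_mul b2 (hM2 p.2) (norm_nonneg _) (by positivity)
      _ ≤ (‖A‖ * (K1 * Mf + K2 * M2) + 1) * p.1 ^ (-(3/2) : ℝ) := by nlinarith
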